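/- Let α, β ∈ ℝ^{n×r}, Φ_1, …, Φ_{p−1} ∈ ℝ^{n×n}. Let 𝒜 ∈ ℝ^{np×np} be the companion matrix of the VAR coefficients 𝒜_1 = I_n + αβ' + Φ_1, 𝒜_j = Φ_j − Φ_{j−1} for 1 < j < p, 𝒜_p = −Φ_{p−1}, and let A ∈ ℝ^{m×m} (m = r + n(p−1)) be the VECM state matrix built from (α, β, Φ_1, …, Φ_{p−1}). Then for every λ ∈ ℂ with λ ∉ {0, 1}: λ is an eigenvalue of 𝒜 if and only if λ is an eigenvalue of A. -/

import Mathlib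

open Matrix Finset

/-- The companion matrix 𝒜 ∈ R^{np×np} of 𝒜₁, …, 𝒜_p (0-indexed blocks):
first block row is (𝒜₁, …, 𝒜_p), block (j+1, j) is I_n, all other blocks 0. -/
def companionMatrix {R : Type*} [Semiring R] {n p : ℕ}
    (A : Fin p → Matrix (Fin n) (Fin n) R) :
    Matrix (Fin p × Fin n) (Fin p × Fin n) R :=
  Matrix.of fun i j =>
    if i.1.val = 0 then A j.1 i.2 j.2
    else if i.1.val = j.1.val + 1 then (if i.2 = j.2 then (1 : R) else 0) else 0

/-- The VECM state matrix A ∈ R^{m×m}, m = r + n(p-1) (here s = p-1), with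
first block row (β'α + I_r, β'Φ₁, …, β'Φ_{p-1}), second block row
(α, Φ₁, …, Φ_{p-1}), blocks (j+2, j+1) equal to I_n, and all other blocks 0.
States are indexed by `Fin r ⊕ Fin s × Fin n`. -/
def vecmStateMatrix {R : Type*} [Ring R] {n r s : ℕ}
    (α β : Matrix (Fin n) (Fin r) R) (Φ : Fin s → Matrix (Fin n) (Fin n) R) :
    Matrix (Fin r ⊕ Fin s × Fin n) (Fin r ⊕ Fin s × Fin n) R :=
  Matrix.of fun i j =>
    match i, j with
    | Sum.inl a, Sum.inl b => (βᵀ * α + 1 : Matrix (Fin r) (Fin r) R) a b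
    | Sum.inl a, Sum.inr (k, b) => (βᵀ * Φ k : Matrix (Fin r) (Fin n) R) a b
    | Sum.inr (i, a), Sum.inl b => if i.val = 0 then α a b else 0
    | Sum.inr (i, a), Sum.inr (k, b) =>
        if i.val = 0 then Φ k a b
        else if i.val = k.val + 1 then (if a = b then (1 : R) else 0) else 0

/-- The VAR(p) coefficients (p = s+1) corresponding to VECM parameters
(α, β, Φ₁, …, Φ_{p-1}): 𝒜₁ = I + αβ' + Φ₁, 𝒜ⱼ = Φⱼ - Φ_{j-1} for 1 < j < p,
𝒜_p = -Φ_{p-1}. -/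
def varCoefs {R : Type*} [Ring R] {n r s : ℕ}
    (α β : Matrix (Fin n) (Fin r) R) (Φ : Fin s → Matrix (Fin n) (Fin n) R) :
    Fin (s + 1) → Matrix (Fin n) (Fin n) R := fun k =>
  let Φ' : ℕ → Matrix (Fin n) (Fin n) R := fun i => if h : i < s then Φ ⟨i, h⟩ else 0
  if k.val = 0 then 1 + α * βᵀ + Φ' 0 else Φ' k.val - Φ' (k.val - 1)


lemma comp_row_zero {s n : ℕ} (A : Fin (s+1) → Matrix (Fin n) (Fin n) ℂ)
    (v : Fin (s+1) × Fin n → ℂ) (a : Fin n) (i : Fin (s+1)) (hi : i.val = 0) :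
    (companionMatrix A).mulVec v (i, a)
      = ∑ j : Fin (s+1), (A j).mulVec (fun b => v (j, b)) a := by
  simp [companionMatrix, Matrix.mulVec, dotProduct, Fintype.sum_prod_type, hi, (Fin.ext hi : i = 0)]

lemma comp_row_succ {s n : ℕ} (A : Fin (s+1) → Matrix (Fin n) (Fin n) ℂ)
    (v : Fin (s+1) × Fin n → ℂ) (a : Fin n) (i j : Fin (s+1)) (hij : i.val = j.val + 1) :
    (companionMatrix A).mulVec v (i, a) = v (j, a) := by
  have h0 : ¬ (i.val = 0) := by omega
  simp only [companionMatrix, Matrix.mulVec, dotProduct, Fintype.sum_prod_type,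
    Matrix.of_apply, h0, if_false]
  rw [Finset.sum_eq_single j]
  · simp [hij]
  · intro j' _ hj'
    have : ¬ (i.val = j'.val + 1) := by intro h; exact hj' (Fin.ext (by omega))
    simp [this]
  · simp

lemma varCoefs_sum {n r s : ℕ} (α β : Matrix (Fin n) (Fin r) ℂ)
    (Φ : Fin s → Matrix (Fin n) (Fin n) ℂ) (l : ℂ) (x : Fin n → ℂ) :
    ∑ k : Fin (s+1), (l⁻¹)^(k:ℕ) • (varCoefs α β Φ k).mulVec x
      = x + (α * βᵀ).mulVec x
        + (1 - l⁻¹) • ∑ k : Fin s, (l⁻¹)^(k:ℕ) • (Φ k).mulVec x := by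
  set Φ' : ℕ → Matrix (Fin n) (Fin n) ℂ :=
    fun i => if h : i < s then Φ ⟨i, h⟩ else 0 with hΦ'
  set g : ℕ → (Fin n → ℂ) := fun k => (l⁻¹)^k • (Φ' k).mulVec x with hg
  have hG : ∑ k : Fin s, (l⁻¹)^(k:ℕ) • (Φ k).mulVec x = ∑ k ∈ Finset.range s, g k := by
    rw [Finset.sum_range fun k => g k]
    · refine Finset.sum_congr rfl fun k _ => ?_
      simp only [hg, hΦ', k.isLt, dif_pos]
  rw [Fin.sum_univ_succ]
  have h0 : varCoefs α β Φ (0 : Fin (s+1)) = 1 + α * βᵀ + Φ' 0 := by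
    simp [varCoefs, hΦ']
  have hsucc : ∀ k : Fin s, (l⁻¹)^((k.succ : Fin (s+1)) : ℕ) •
      (varCoefs α β Φ k.succ).mulVec x = (g (k.val + 1) - g k.val) + (1 - l⁻¹) • g k.val := by
    intro k
    have h1 : varCoefs α β Φ k.succ = Φ' (k.val + 1) - Φ' k.val := by
      simp [varCoefs, hΦ']
    rw [h1]
    simp only [hg, Fin.val_succ, Matrix.sub_mulVec, smul_sub, smul_smul, sub_smul, one_smul,
      pow_succ]
    ring_nf
    module
  rw [Finset.sum_congr rfl fun k _ => hsucc k, Finset.sum_add_distrib,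
    Fin.sum_univ_eq_sum_range (fun k => g (k+1) - g k) s,
    Fin.sum_univ_eq_sum_range (fun k => (1 - l⁻¹) • g k) s,
    Finset.sum_range_sub g, ← Finset.smul_sum, ← hG]
  have hgs : g s = 0 := by simp [hg, hΦ']
  rw [h0, hgs]
  simp only [Fin.val_zero, pow_zero, one_smul, Matrix.add_mulVec, Matrix.one_mulVec]
  have hg0 : g 0 = (Φ' 0).mulVec x := by simp [hg]
  rw [hg0]
  abel

def redEq {n r s : ℕ} (α β : Matrix (Fin n) (Fin r) ℂ)
    (Φ : Fin s → Matrix (Fin n) (Fin n) ℂ) (l : ℂ) (x : Fin n → ℂ) : Prop :=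
  (l/(l-1)) • (α * βᵀ).mulVec x + (∑ k : Fin s, (l⁻¹)^(k:ℕ) • (Φ k).mulVec x) = l • x


lemma vecm_row_inl {n r s : ℕ} (α β : Matrix (Fin n) (Fin r) ℂ)
    (Φ : Fin s → Matrix (Fin n) (Fin n) ℂ) (q : Fin r ⊕ Fin s × Fin n → ℂ) (a : Fin r) :
    (vecmStateMatrix α β Φ).mulVec q (Sum.inl a)
      = (βᵀ * α + 1).mulVec (fun b => q (Sum.inl b)) a
        + ∑ k : Fin s, (βᵀ * Φ k).mulVec (fun b => q (Sum.inr (k, b))) a := by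
  simp [vecmStateMatrix, Matrix.mulVec, dotProduct, Fintype.sum_sum_type,
    Fintype.sum_prod_type, Finset.mul_sum, Finset.sum_mul]

lemma vecm_row_zero {n r s : ℕ} (α β : Matrix (Fin n) (Fin r) ℂ)
    (Φ : Fin s → Matrix (Fin n) (Fin n) ℂ) (q : Fin r ⊕ Fin s × Fin n → ℂ)
    (a : Fin n) (i : Fin s) (hi : i.val = 0) :
    (vecmStateMatrix α β Φ).mulVec q (Sum.inr (i, a))
      = α.mulVec (fun b => q (Sum.inl b)) a
        + ∑ k : Fin s, (Φ k).mulVec (fun b => q (Sum.inr (k, b))) a := by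
  simp [vecmStateMatrix, Matrix.mulVec, dotProduct, Fintype.sum_sum_type,
    Fintype.sum_prod_type, hi]

lemma vecm_row_succ {n r s : ℕ} (α β : Matrix (Fin n) (Fin r) ℂ)
    (Φ : Fin s → Matrix (Fin n) (Fin n) ℂ) (q : Fin r ⊕ Fin s × Fin n → ℂ)
    (a : Fin n) (i k : Fin s) (hik : i.val = k.val + 1) :
    (vecmStateMatrix α β Φ).mulVec q (Sum.inr (i, a)) = q (Sum.inr (k, a)) := by
  have h0 : ¬ (i.val = 0) := by omega
  simp only [vecmStateMatrix, Matrix.mulVec, dotProduct, Fintype.sum_sum_type,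
    Fintype.sum_prod_type, Matrix.of_apply, h0, if_false]
  rw [Finset.sum_eq_zero, zero_add, Finset.sum_eq_single k]
  · simp [hik]
  · intro k' _ hk'
    have : ¬ (i.val = k'.val + 1) := by intro h; exact hk' (Fin.ext (by omega))
    simp [this]
  · simp
  · intro b _; simp

lemma vecm_iff_red {n r t : ℕ} (α β : Matrix (Fin n) (Fin r) ℂ)
    (Φ : Fin (t+1) → Matrix (Fin n) (Fin n) ℂ) {l : ℂ} (hl0 : l ≠ 0) (hl1 : l ≠ 1) :
    (∃ q : Fin r ⊕ Fin (t+1) × Fin n → ℂ, q ≠ 0 ∧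
        (vecmStateMatrix α β Φ).mulVec q = l • q)
      ↔ (∃ x : Fin n → ℂ, x ≠ 0 ∧ redEq α β Φ l x) := by
  have hl1' : l - 1 ≠ 0 := sub_ne_zero.mpr hl1
  have hc : (l - 1)⁻¹ * l = l / (l - 1) := by ring
  constructor
  · rintro ⟨q, hq0, hq⟩
    set w : Fin r → ℂ := fun b => q (Sum.inl b) with hwdef
    set x : Fin n → ℂ := fun a => q (Sum.inr (0, a)) with hxdef
    have key : ∀ m : ℕ, ∀ hm : m < t + 1, ∀ a : Fin n,
        q (Sum.inr (⟨m, hm⟩, a)) = (l⁻¹)^m * x a := by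
      intro m
      induction m with
      | zero => intro hm a; simp [hxdef]
      | succ m ih =>
        intro hm a
        have hm' : m < t + 1 := by omega
        have hrow := vecm_row_succ α β Φ q a ⟨m+1, hm⟩ ⟨m, hm'⟩ rfl
        have heig := congrFun hq (Sum.inr (⟨m+1, hm⟩, a))
        simp only [Pi.smul_apply, smul_eq_mul] at heig
        rw [hrow, ih hm' a] at heig
        have hv' : q (Sum.inr (⟨m+1, hm⟩, a)) = l⁻¹ * (l⁻¹^m * x a) := by
          rw [heig, ← mul_assoc, inv_mul_cancel₀ hl0, one_mul]
        rw [hv', pow_succ]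
        ring
    have hsub : ∀ j : Fin (t+1), (fun b => q (Sum.inr (j, b))) = (l⁻¹)^(j:ℕ) • x := by
      intro j; funext b
      rw [show j = (⟨j.val, j.isLt⟩ : Fin (t+1)) from rfl, key j.val j.isLt b]
      simp
    set G := ∑ k : Fin (t+1), (l⁻¹)^(k:ℕ) • (Φ k).mulVec x with hGdef
    have R2 : α.mulVec w + G = l • x := by
      funext a
      have h := vecm_row_zero α β Φ q a 0 rfl
      have heig := congrFun hq (Sum.inr (0, a))
      simp only [Pi.smul_apply, smul_eq_mul] at heig
      rw [h] at heig
      rw [Finset.sum_congr rfl (fun k _ => by rw [hsub k, Matrix.mulVec_smul])] at heig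
      simp only [Pi.add_apply, Pi.smul_apply, smul_eq_mul, hGdef, Finset.sum_apply]
      exact heig
    have hBG : βᵀ.mulVec G = ∑ k : Fin (t+1), (l⁻¹)^(k:ℕ) • (βᵀ * Φ k).mulVec x := by
      calc βᵀ.mulVec G = βᵀ.mulVecLin (∑ k : Fin (t+1), (l⁻¹)^(k:ℕ) • (Φ k).mulVec x) := by
            rw [hGdef, Matrix.mulVecLin_apply]
        _ = ∑ k : Fin (t+1), βᵀ.mulVecLin ((l⁻¹)^(k:ℕ) • (Φ k).mulVec x) :=
            map_sum _ _ _
        _ = ∑ k : Fin (t+1), (l⁻¹)^(k:ℕ) • (βᵀ * Φ k).mulVec x := by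
            refine Finset.sum_congr rfl fun k _ => ?_
            rw [Matrix.mulVecLin_apply, Matrix.mulVec_smul, mulVec_mulVec]
    have R1 : βᵀ.mulVec (α.mulVec w) + w + βᵀ.mulVec G = l • w := by
      funext a
      have h := vecm_row_inl α β Φ q a
      have heig := congrFun hq (Sum.inl a)
      simp only [Pi.smul_apply, smul_eq_mul] at heig
      rw [h] at heig
      have hA1 : (βᵀ * α + 1).mulVec w = βᵀ.mulVec (α.mulVec w) + w := by
        rw [Matrix.add_mulVec, Matrix.one_mulVec, ← mulVec_mulVec]
      have hB : ∑ k : Fin (t+1), (βᵀ * Φ k).mulVec (fun b => q (Sum.inr (k, b))) a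
          = βᵀ.mulVec G a := by
        rw [Finset.sum_congr rfl (fun k _ => by rw [hsub k, Matrix.mulVec_smul])]
        rw [hBG]
        simp [Finset.sum_apply]
      rw [hA1, hB] at heig
      have hqa : q (Sum.inl a) = w a := rfl
      rw [hqa] at heig
      simp only [Pi.add_apply] at heig
      simp only [Pi.add_apply, Pi.smul_apply, smul_eq_mul]
      linear_combination heig
    have hw : w = (l/(l-1)) • βᵀ.mulVec x := by
      have h1 : βᵀ.mulVec (α.mulVec w + G) + w = l • w := by
        rw [Matrix.mulVec_add, ← R1]; abel
      rw [R2, Matrix.mulVec_smul] at h1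
      have h2 : (l-1) • w = l • βᵀ.mulVec x := by
        rw [sub_smul, one_smul, ← h1]; abel
      have h3 := congrArg (fun u => (l-1)⁻¹ • u) h2
      simp only [smul_smul, inv_mul_cancel₀ hl1', one_smul] at h3
      rw [h3, hc]
    have hx0 : x ≠ 0 := by
      intro h0
      apply hq0
      have hw0 : w = 0 := by rw [hw, h0, Matrix.mulVec_zero, smul_zero]
      funext p
      cases p with
      | inl b => exact congrFun hw0 b
      | inr p =>
        obtain ⟨k, a⟩ := p
        have hk := key k.val k.isLt a
        rw [h0] at hk
        simpa using hk
    refine ⟨x, hx0, ?_⟩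
    unfold redEq
    rw [hw, Matrix.mulVec_smul, mulVec_mulVec] at R2
    exact R2
  · rintro ⟨x, hx0, hred⟩
    set w : Fin r → ℂ := (l/(l-1)) • βᵀ.mulVec x with hwdef
    set q : Fin r ⊕ Fin (t+1) × Fin n → ℂ :=
      Sum.elim w (fun p => (l⁻¹)^(p.1 : ℕ) * x p.2) with hqdef
    obtain ⟨a0, ha0⟩ := Function.ne_iff.mp hx0
    have hq0 : q ≠ 0 := by
      intro h0
      have := congrFun h0 (Sum.inr (0, a0))
      simp [hqdef] at this
      exact ha0 this
    have hwq : (fun b => q (Sum.inl b)) = w := by funext b; simp [hqdef]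
    have hsub : ∀ j : Fin (t+1), (fun b => q (Sum.inr (j, b))) = (l⁻¹)^(j:ℕ) • x := by
      intro j; funext b; simp [hqdef]
    set G := ∑ k : Fin (t+1), (l⁻¹)^(k:ℕ) • (Φ k).mulVec x with hGdef
    have R2eq : α.mulVec w + G = l • x := by
      rw [hwdef, Matrix.mulVec_smul, mulVec_mulVec]
      exact hred
    refine ⟨q, hq0, ?_⟩
    funext p
    cases p with
    | inr p =>
      obtain ⟨i, a⟩ := p
      rcases Nat.eq_zero_or_pos i.val with hi | hi
      · rw [vecm_row_zero α β Φ q a i hi, hwq,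
          Finset.sum_congr rfl (fun k _ => by rw [hsub k, Matrix.mulVec_smul])]
        have h1 := congrFun R2eq a
        simp only [Pi.add_apply, Pi.smul_apply, smul_eq_mul, hGdef, Finset.sum_apply] at h1 ⊢
        rw [h1]
        simp [hqdef, hi]
      · have hj : i.val - 1 < t + 1 := by omega
        rw [vecm_row_succ α β Φ q a i ⟨i.val - 1, hj⟩
          (by show i.val = (i.val - 1) + 1; omega)]
        simp only [hqdef, Pi.smul_apply, smul_eq_mul, Sum.elim_inr]
        rw [show (i : ℕ) = (i.val - 1) + 1 by omega, pow_succ]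
        field_simp
        ring_nf
        rw [Nat.add_sub_cancel_left]
    | inl a =>
      have main : (βᵀ * α + 1).mulVec w
          + (∑ k : Fin (t+1), (l⁻¹)^(k:ℕ) • (βᵀ * Φ k).mulVec x) = l • w := by
        have hA1 : (βᵀ * α + 1).mulVec w = βᵀ.mulVec (α.mulVec w) + w := by
          rw [Matrix.add_mulVec, Matrix.one_mulVec, ← mulVec_mulVec]
        have hBG : ∑ k : Fin (t+1), (l⁻¹)^(k:ℕ) • (βᵀ * Φ k).mulVec x
            = βᵀ.mulVec G := by
          calc ∑ k : Fin (t+1), (l⁻¹)^(k:ℕ) • (βᵀ * Φ k).mulVec x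
              = ∑ k : Fin (t+1), βᵀ.mulVecLin ((l⁻¹)^(k:ℕ) • (Φ k).mulVec x) := by
                refine Finset.sum_congr rfl fun k _ => ?_
                rw [Matrix.mulVecLin_apply, Matrix.mulVec_smul, mulVec_mulVec]
            _ = βᵀ.mulVecLin G := (map_sum _ _ _).symm
            _ = βᵀ.mulVec G := by rw [Matrix.mulVecLin_apply]
        have h1 : βᵀ.mulVec (α.mulVec w) + βᵀ.mulVec G = βᵀ.mulVec (l • x) := by
          rw [← Matrix.mulVec_add, R2eq]
        have h2 : βᵀ.mulVec (l • x) + w = l • w := by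
          rw [Matrix.mulVec_smul, hwdef, smul_smul, ← add_smul]
          congr 1
          field_simp
          ring
        calc (βᵀ * α + 1).mulVec w + ∑ k : Fin (t+1), (l⁻¹)^(k:ℕ) • (βᵀ * Φ k).mulVec x
            = (βᵀ.mulVec (α.mulVec w) + βᵀ.mulVec G) + w := by rw [hA1, hBG]; abel
          _ = βᵀ.mulVec (l • x) + w := by rw [h1]
          _ = l • w := h2
      rw [vecm_row_inl α β Φ q a, hwq,
        Finset.sum_congr rfl (fun k _ => by rw [hsub k, Matrix.mulVec_smul])]
      have h3 := congrFun main a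
      simp only [Pi.add_apply, Pi.smul_apply, smul_eq_mul, Finset.sum_apply] at h3 ⊢
      rw [h3]
      simp [hqdef]

lemma red_iff {n r s : ℕ} (α β : Matrix (Fin n) (Fin r) ℂ)
    (Φ : Fin s → Matrix (Fin n) (Fin n) ℂ) {l : ℂ} (hl0 : l ≠ 0) (hl1 : l ≠ 1)
    (x : Fin n → ℂ) :
    (x + (α * βᵀ).mulVec x
        + (1 - l⁻¹) • ∑ k : Fin s, (l⁻¹)^(k:ℕ) • (Φ k).mulVec x = l • x)
      ↔ redEq α β Φ l x := by
  have hl1' : l - 1 ≠ 0 := sub_ne_zero.mpr hl1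
  unfold redEq
  constructor
  · intro h
    funext a
    have ha := congrFun h a
    simp only [Pi.add_apply, Pi.smul_apply, smul_eq_mul, Finset.sum_apply] at ha ⊢
    field_simp at ha ⊢
    linear_combination ha
  · intro h
    funext a
    have ha := congrFun h a
    simp only [Pi.add_apply, Pi.smul_apply, smul_eq_mul, Finset.sum_apply] at ha ⊢
    field_simp at ha ⊢
    linear_combination ha

lemma comp_iff_red {n r s : ℕ} (α β : Matrix (Fin n) (Fin r) ℂ)
    (Φ : Fin s → Matrix (Fin n) (Fin n) ℂ) {l : ℂ} (hl0 : l ≠ 0) (hl1 : l ≠ 1) :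
    (∃ v : Fin (s + 1) × Fin n → ℂ, v ≠ 0 ∧
        (companionMatrix (varCoefs α β Φ)).mulVec v = l • v)
      ↔ (∃ x : Fin n → ℂ, x ≠ 0 ∧ redEq α β Φ l x) := by
  set A := varCoefs α β Φ with hA
  constructor
  · rintro ⟨v, hv0, hv⟩
    set x : Fin n → ℂ := fun a => v (0, a) with hx
    have key : ∀ m : ℕ, ∀ hm : m < s + 1, ∀ a : Fin n,
        v (⟨m, hm⟩, a) = (l⁻¹)^m * x a := by
      intro m
      induction m with
      | zero => intro hm a; simp [hx]
      | succ m ih =>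
        intro hm a
        have hm' : m < s + 1 := by omega
        have hrow := comp_row_succ A v a ⟨m+1, hm⟩ ⟨m, hm'⟩ rfl
        have heig := congrFun hv (⟨m+1, hm⟩, a)
        simp only [Pi.smul_apply, smul_eq_mul] at heig
        rw [hrow, ih hm' a] at heig
        have hv' : v (⟨m+1, hm⟩, a) = l⁻¹ * (l⁻¹^m * x a) := by
          rw [heig, ← mul_assoc, inv_mul_cancel₀ hl0, one_mul]
        rw [hv', pow_succ]
        ring
    have hx0 : x ≠ 0 := by
      intro h
      apply hv0
      funext p
      obtain ⟨k, a⟩ := p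
      rw [show k = (⟨k.val, k.isLt⟩ : Fin (s+1)) from rfl, key k.val k.isLt a, h]
      simp
    refine ⟨x, hx0, ?_⟩
    rw [← red_iff α β Φ hl0 hl1, ← varCoefs_sum]
    funext a
    have h1 := comp_row_zero A v a 0 rfl
    have heig := congrFun hv ((0 : Fin (s+1)), a)
    simp only [Pi.smul_apply, smul_eq_mul] at heig
    rw [h1] at heig
    have hsub : ∀ j : Fin (s+1), (fun b => v (j, b)) = (l⁻¹)^(j:ℕ) • x := by
      intro j; funext b
      rw [show j = (⟨j.val, j.isLt⟩ : Fin (s+1)) from rfl, key j.val j.isLt b]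
      simp
    rw [Finset.sum_congr rfl (fun j _ => by rw [hsub j, Matrix.mulVec_smul])] at heig
    simp only [Finset.sum_apply, Pi.smul_apply, smul_eq_mul] at heig ⊢
    rw [heig]
  · rintro ⟨x, hx0, hred⟩
    set v : Fin (s+1) × Fin n → ℂ := fun p => (l⁻¹)^(p.1 : ℕ) * x p.2 with hvdef
    have hv0 : v ≠ 0 := by
      intro h
      apply hx0
      funext a
      have := congrFun h ((0 : Fin (s+1)), a)
      simpa [hvdef] using this
    refine ⟨v, hv0, ?_⟩
    have hmain : ∑ k : Fin (s+1), (l⁻¹)^(k:ℕ) • (A k).mulVec x = l • x := by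
      rw [hA, varCoefs_sum, red_iff α β Φ hl0 hl1]
      exact hred
    funext p
    obtain ⟨i, a⟩ := p
    rcases Nat.eq_zero_or_pos i.val with hi | hi
    · rw [comp_row_zero A v a i hi]
      have hsub : ∀ j : Fin (s+1), (fun b => v (j, b)) = (l⁻¹)^(j:ℕ) • x := by
        intro j; funext b; simp [hvdef]
      rw [Finset.sum_congr rfl (fun j _ => by rw [hsub j, Matrix.mulVec_smul])]
      have := congrFun hmain a
      simp only [Finset.sum_apply] at this
      rw [this]
      simp [hvdef, hi]
    · have hj : i.val - 1 < s + 1 := by omega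
      rw [comp_row_succ A v a i ⟨i.val - 1, hj⟩ (by show i.val = (i.val - 1) + 1; omega)]
      simp only [hvdef, Pi.smul_apply, smul_eq_mul]
      rw [show (i : ℕ) = (i.val - 1) + 1 by omega, pow_succ]
      field_simp
      ring_nf
      rw [Nat.add_sub_cancel_left]

lemma syl {n r : ℕ} (A : Matrix (Fin r) (Fin n) ℂ) (B : Matrix (Fin n) (Fin r) ℂ)
    {μ : ℂ} (hμ : μ ≠ 0)
    (h : ∃ x : Fin n → ℂ, x ≠ 0 ∧ (B*A).mulVec x = μ • x) :
    ∃ w : Fin r → ℂ, w ≠ 0 ∧ (A*B).mulVec w = μ • w := by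
  obtain ⟨x, hx, hBA⟩ := h
  refine ⟨A.mulVec x, ?_, ?_⟩
  · intro h0
    apply hx
    have h1 : (B*A).mulVec x = B.mulVec (A.mulVec x) := (mulVec_mulVec x B A).symm
    rw [h1, h0, Matrix.mulVec_zero] at hBA
    exact (smul_eq_zero.mp hBA.symm).resolve_left hμ
  · calc (A*B).mulVec (A.mulVec x) = A.mulVec (B.mulVec (A.mulVec x)) :=
        (mulVec_mulVec _ A B).symm
      _ = A.mulVec ((B*A).mulVec x) := congrArg A.mulVec (mulVec_mulVec x B A)
      _ = A.mulVec (μ • x) := by rw [hBA]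
      _ = μ • A.mulVec x := Matrix.mulVec_smul A μ x

lemma red_zero_iff {n r : ℕ} (α β : Matrix (Fin n) (Fin r) ℂ)
    (Φ : Fin 0 → Matrix (Fin n) (Fin n) ℂ) {l : ℂ} (hl0 : l ≠ 0) (hl1 : l ≠ 1)
    (x : Fin n → ℂ) :
    redEq α β Φ l x ↔ (α * βᵀ).mulVec x = (l-1) • x := by
  have hl1' : l - 1 ≠ 0 := sub_ne_zero.mpr hl1
  unfold redEq
  rw [Finset.univ_eq_empty, Finset.sum_empty, add_zero]
  constructor
  · intro h
    have h3 := congrArg (fun u => ((l-1)/l) • u) h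
    simp only [smul_smul] at h3
    rw [show (l-1)/l * (l/(l-1)) = 1 by field_simp, show (l-1)/l * l = l - 1 by field_simp,
      one_smul] at h3
    exact h3
  · intro h
    rw [h, smul_smul, show l/(l-1) * (l-1) = l by field_simp]

lemma vecm_zero_iff {n r : ℕ} (α β : Matrix (Fin n) (Fin r) ℂ)
    (Φ : Fin 0 → Matrix (Fin n) (Fin n) ℂ) {l : ℂ} (hl0 : l ≠ 0) (hl1 : l ≠ 1) :
    (∃ q : Fin r ⊕ Fin 0 × Fin n → ℂ, q ≠ 0 ∧
        (vecmStateMatrix α β Φ).mulVec q = l • q)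
      ↔ (∃ w : Fin r → ℂ, w ≠ 0 ∧ (βᵀ * α).mulVec w = (l-1) • w) := by
  have hrow : ∀ (q : Fin r ⊕ Fin 0 × Fin n → ℂ) (a : Fin r),
      (vecmStateMatrix α β Φ).mulVec q (Sum.inl a)
        = (βᵀ * α + 1).mulVec (fun b => q (Sum.inl b)) a := by
    intro q a
    simp [vecmStateMatrix, Matrix.mulVec, dotProduct, Fintype.sum_sum_type]
  constructor
  · rintro ⟨q, hq0, hq⟩
    refine ⟨fun b => q (Sum.inl b), ?_, ?_⟩
    · intro h0
      apply hq0
      funext p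
      cases p with
      | inl b => exact congrFun h0 b
      | inr p => exact p.1.elim0
    · funext a
      have heig := congrFun hq (Sum.inl a)
      simp only [Pi.smul_apply, smul_eq_mul] at heig
      rw [hrow q a] at heig
      rw [Matrix.add_mulVec, Matrix.one_mulVec] at heig
      simp only [Pi.add_apply, Pi.smul_apply, smul_eq_mul] at heig ⊢
      linear_combination heig
  · rintro ⟨w, hw0, hw⟩
    set q : Fin r ⊕ Fin 0 × Fin n → ℂ := Sum.elim w (fun p => p.1.elim0) with hqdef
    refine ⟨q, ?_, ?_⟩
    · intro h0
      apply hw0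
      funext b
      exact congrFun h0 (Sum.inl b)
    · funext p
      cases p with
      | inr p => exact p.1.elim0
      | inl a =>
        rw [hrow q a]
        have hwq : (fun b => q (Sum.inl b)) = w := by funext b; simp [hqdef]
        rw [hwq, Matrix.add_mulVec, Matrix.one_mulVec]
        have h1 := congrFun hw a
        simp only [Pi.add_apply, Pi.smul_apply, smul_eq_mul, hqdef, Sum.elim_inl] at h1 ⊢
        linear_combination h1

/-- For λ ∉ {0,1}, λ is an eigenvalue of the companion matrix 𝒜 of the VAR
coefficients derived from (α, β, Φ₁, …, Φ_{p-1}) iff λ is an eigenvalue of the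
VECM state matrix A built from the same parameters. -/
theorem stmt16 (n r s : ℕ)
    (α β : Matrix (Fin n) (Fin r) ℝ) (Φ : Fin s → Matrix (Fin n) (Fin n) ℝ)
    (l : ℂ) (hl0 : l ≠ 0) (hl1 : l ≠ 1) :
    (∃ v : Fin (s + 1) × Fin n → ℂ, v ≠ 0 ∧
        (companionMatrix (varCoefs (α.map Complex.ofReal) (β.map Complex.ofReal)
          (fun k => (Φ k).map Complex.ofReal))).mulVec v = l • v) ↔
    (∃ q : Fin r ⊕ Fin s × Fin n → ℂ, q ≠ 0 ∧
        (vecmStateMatrix (α.map Complex.ofReal) (β.map Complex.ofReal)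
          (fun k => (Φ k).map Complex.ofReal)).mulVec q = l • q) := by
  cases s with
  | zero =>
    have hl1' : l - 1 ≠ 0 := sub_ne_zero.mpr hl1
    rw [comp_iff_red _ _ _ hl0 hl1, vecm_zero_iff _ _ _ hl0 hl1]
    constructor
    · rintro ⟨x, hx, hr⟩
      exact syl ((β.map Complex.ofReal)ᵀ) (α.map Complex.ofReal) hl1'
        ⟨x, hx, (red_zero_iff _ _ _ hl0 hl1 x).mp hr⟩
    · rintro ⟨w, hw, hr⟩
      obtain ⟨x, hx, h⟩ := syl (α.map Complex.ofReal) ((β.map Complex.ofReal)ᵀ) hl1'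
        ⟨w, hw, hr⟩
      exact ⟨x, hx, (red_zero_iff _ _ _ hl0 hl1 x).mpr h⟩
  | succ t =>
    exact (comp_iff_red _ _ _ hl0 hl1).trans (vecm_iff_red _ _ _ hl0 hl1).symm
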